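/- arXiv:1710.05227 — 3 statements merged into one kernel-verified Lean document; each statement's English description precedes it below -/
import Mathlib

section
/- Let $c>0$, $f\in\mathcal{FK}^c_{d-1}$, and let $K\subset[0,\infty)\times\mathbb{R}^d$ be compact. Define the finite measure $\mu(d\xi)=\mathbf{1}_K(\xi)|f(\xi)|\,m(d\xi)$ where $m$ is Lebesgue measure on $\mathbb{R}^{d+1}$. For $(s,x)\in[0,\infty)\times\mathbb{R}^d$ define $g_{s,x}(t,y)=(t-s)^{-(d+1)/2}e^{-c|y-x|^2/(t-s)}$ for $t>s$ and $g_{s,x}(t,y)=0$ for $t\le s$. Then the family $\{g_{s,x}\}$ is uniformly integrable with respect to $\mu$, i.e. $\lim_{a\to\infty}\sup_{(s,x)}\int_{\{g_{s,x}>a\}}g_{s,x}\,d\mu=0$. -/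
open MeasureTheory Set Filter

noncomputable def gker (d : ℕ) (c s : ℝ) (x : EuclideanSpace ℝ (Fin d)) (t : ℝ)
    (y : EuclideanSpace ℝ (Fin d)) : ℝ :=
  Real.rpow (t - s) (-(((d : ℝ) + 1) / 2)) * Real.exp (-c * ‖y - x‖ ^ 2 / (t - s))

/-- The forward-Kato functional `N^{c,+}_h(f)`. -/
noncomputable def FKnorm (d : ℕ) (c h : ℝ) (f : ℝ → EuclideanSpace ℝ (Fin d) → ℝ) : ENNReal :=
  ⨆ (s : ℝ) (_ : 0 ≤ s) (x : EuclideanSpace ℝ (Fin d)),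
    ∫⁻ t in Set.Ioo s (s + h), ∫⁻ y, ENNReal.ofReal (gker d c s x t y * |f t y|)

/-- Membership in the forward-Kato class `FK^c_{d-1}`. -/
def memFK (d : ℕ) (c : ℝ) (f : ℝ → EuclideanSpace ℝ (Fin d) → ℝ) : Prop :=
  Filter.Tendsto (fun h => FKnorm d c h f) (nhdsWithin 0 (Set.Ioi 0)) (nhds 0)

lemma gker_measurable (d : ℕ) (c s : ℝ) (x : EuclideanSpace ℝ (Fin d)) :
    Measurable (fun p : ℝ × EuclideanSpace ℝ (Fin d) => gker d c s x p.1 p.2) := by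
  unfold gker
  have h1 : Measurable fun p : ℝ × EuclideanSpace ℝ (Fin d) =>
      Real.rpow (p.1 - s) (-(((d : ℝ) + 1) / 2)) := by
    show Measurable fun p : ℝ × EuclideanSpace ℝ (Fin d) =>
      (p.1 - s) ^ (-(((d : ℝ) + 1) / 2))
    exact (measurable_fst.sub measurable_const).pow measurable_const
  have h2 : Measurable fun p : ℝ × EuclideanSpace ℝ (Fin d) =>
      Real.exp (-c * ‖p.2 - x‖ ^ 2 / (p.1 - s)) := by
    apply Measurable.exp
    exact (((measurable_snd.sub measurable_const).norm.pow measurable_const).const_mul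
      (-c)).div (measurable_fst.sub measurable_const)
  exact h1.mul h2

theorem stmt2 (d : ℕ) (c : ℝ) (hc : 0 < c)
    (f : ℝ → EuclideanSpace ℝ (Fin d) → ℝ)
    (hf : Measurable (Function.uncurry f))
    (hFK : memFK d c f)
    (K : Set (ℝ × EuclideanSpace ℝ (Fin d))) (hK : IsCompact K)
    (hKpos : K ⊆ {p | 0 ≤ p.1}) :
    Filter.Tendsto
      (fun a : ℝ =>
        ⨆ (s : ℝ) (_ : 0 ≤ s) (x : EuclideanSpace ℝ (Fin d)),
          ∫⁻ p in {p : ℝ × EuclideanSpace ℝ (Fin d) | s < p.1 ∧ a < gker d c s x p.1 p.2},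
            ENNReal.ofReal (gker d c s x p.1 p.2)
            ∂((volume.restrict K).withDensity fun p => ENNReal.ofReal |f p.1 p.2|))
      Filter.atTop (nhds 0) := by
  have hd1 : (0:ℝ) < (d : ℝ) + 1 := by positivity
  set e : ℝ := -(2 / ((d : ℝ) + 1)) with he
  have hene : e < 0 := by
    rw [he]; simp only [neg_neg, neg_lt, neg_zero]; positivity
  -- the comparison function
  have hcomp : Tendsto (fun a : ℝ => a ^ e) atTop (nhdsWithin 0 (Ioi 0)) := by
    rw [tendsto_nhdsWithin_iff]
    constructor
    · rw [he]; exact tendsto_rpow_neg_atTop (by positivity)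
    · filter_upwards [eventually_gt_atTop (0:ℝ)] with a ha
      exact Real.rpow_pos_of_pos ha e
  have hG : Tendsto (fun a : ℝ => FKnorm d c (a ^ e) f) atTop (nhds 0) := hFK.comp hcomp
  apply tendsto_of_tendsto_of_tendsto_of_le_of_le' tendsto_const_nhds hG
  · exact Eventually.of_forall fun a => zero_le
  · filter_upwards [eventually_gt_atTop (0:ℝ)] with a ha
    refine iSup_le fun s => iSup_le fun hs => iSup_le fun x => ?_
    set q : ℝ := ((d : ℝ) + 1) / 2 with hqdef
    have hq : 0 < q := by positivity
    set h : ℝ := a ^ e with hh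
    set B : Set (ℝ × EuclideanSpace ℝ (Fin d)) := Ioo s (s + h) ×ˢ univ with hB
    have hBmeas : MeasurableSet B := measurableSet_Ioo.prod MeasurableSet.univ
    -- the set inclusion
    have hsub : {p : ℝ × EuclideanSpace ℝ (Fin d) | s < p.1 ∧ a < gker d c s x p.1 p.2} ⊆ B := by
      rintro ⟨t, y⟩ ⟨hst, hag⟩
      have hu : 0 < t - s := sub_pos.2 hst
      have hexp : Real.exp (-c * ‖y - x‖ ^ 2 / (t - s)) ≤ 1 := by
        rw [Real.exp_le_one_iff]
        have : 0 ≤ c * ‖y - x‖ ^ 2 := by positivity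
        rw [div_nonpos_iff]
        right
        constructor
        · linarith
        · linarith
      have h1 : a < (t - s) ^ (-q) := by
        refine lt_of_lt_of_le hag ?_
        have hnn : 0 ≤ Real.rpow (t - s) (-q) := Real.rpow_nonneg hu.le _
        calc gker d c s x t y = Real.rpow (t - s) (-q) * Real.exp (-c * ‖y - x‖ ^ 2 / (t - s)) :=
              rfl
          _ ≤ Real.rpow (t - s) (-q) * 1 := by
              exact mul_le_mul_of_nonneg_left hexp hnn
          _ = (t - s) ^ (-q) := mul_one _
      have h2 : t - s < a ^ e := by
        have := Real.rpow_lt_rpow_of_neg ha h1 hene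
        calc t - s = ((t - s) ^ (-q)) ^ e := by
              rw [← Real.rpow_mul hu.le]
              have hqe : -q * e = 1 := by
                rw [he, hqdef]; field_simp
              rw [hqe, Real.rpow_one]
          _ < a ^ e := this
      exact ⟨⟨hst, by linarith [h2]⟩, mem_univ _⟩
    have hgm : Measurable (fun p : ℝ × EuclideanSpace ℝ (Fin d) =>
        ENNReal.ofReal (gker d c s x p.1 p.2)) := (gker_measurable d c s x).ennreal_ofReal
    have hwm : Measurable (fun p : ℝ × EuclideanSpace ℝ (Fin d) =>
        ENNReal.ofReal |f p.1 p.2|) := by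
      have : Measurable fun p : ℝ × EuclideanSpace ℝ (Fin d) => |f p.1 p.2| := hf.abs
      exact this.ennreal_ofReal
    calc ∫⁻ p in {p : ℝ × EuclideanSpace ℝ (Fin d) | s < p.1 ∧ a < gker d c s x p.1 p.2},
            ENNReal.ofReal (gker d c s x p.1 p.2)
            ∂((volume.restrict K).withDensity fun p => ENNReal.ofReal |f p.1 p.2|)
        ≤ ∫⁻ p in B, ENNReal.ofReal (gker d c s x p.1 p.2)
            ∂((volume.restrict K).withDensity fun p => ENNReal.ofReal |f p.1 p.2|) :=
          lintegral_mono_set hsub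
      _ = ∫⁻ p in B, ENNReal.ofReal |f p.1 p.2| * ENNReal.ofReal (gker d c s x p.1 p.2)
            ∂(volume.restrict K) := by
          rw [setLIntegral_withDensity_eq_setLIntegral_mul _ hwm hgm hBmeas]
          rfl
      _ ≤ ∫⁻ p in B, ENNReal.ofReal |f p.1 p.2| * ENNReal.ofReal (gker d c s x p.1 p.2)
            ∂volume :=
          lintegral_mono' (Measure.restrict_mono (subset_refl B) Measure.restrict_le_self) le_rfl
      _ = ∫⁻ p in B, ENNReal.ofReal (gker d c s x p.1 p.2 * |f p.1 p.2|) ∂volume := by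
          refine setLIntegral_congr_fun hBmeas ?_
          rintro ⟨t, y⟩ hp
          have hu : 0 < t - s := sub_pos.2 hp.1.1
          have hgnn : 0 ≤ gker d c s x t y := by
            apply mul_nonneg (Real.rpow_nonneg hu.le _) (Real.exp_nonneg _)
          simp only
          rw [mul_comm, ← ENNReal.ofReal_mul hgnn]
      _ = ∫⁻ t in Ioo s (s + h), ∫⁻ y, ENNReal.ofReal (gker d c s x t y * |f t y|) := by
          have hFm : Measurable (fun p : ℝ × EuclideanSpace ℝ (Fin d) =>
              ENNReal.ofReal (gker d c s x p.1 p.2 * |f p.1 p.2|)) :=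
            ((gker_measurable d c s x).mul hf.abs).ennreal_ofReal
          rw [hB, MeasureTheory.Measure.volume_eq_prod, ← Measure.prod_restrict,
            Measure.restrict_univ, MeasureTheory.lintegral_prod _ hFm.aemeasurable]
      _ ≤ FKnorm d c (a ^ e) f := by
          refine le_iSup_of_le s ?_
          refine le_iSup_of_le hs ?_
          exact le_iSup_of_le x le_rfl
end

section
/- Let $c>0$ and define $f(t,y)=-\big((1-t)^{1/2}\ln(1-t)\big)^{-1}$ for $1/2\le t<1$ and $|y|\le 3d(1-t)^{1/2}$, and $f(t,y)=0$ otherwise. Then $f$ belongs to the forward-Kato class $\mathcal{FK}^c_{d-1}$, i.e. $\lim_{h\to0}\sup_{(s,x)}\int_s^{s+h}\int_{\mathbb{R}^d}(t-s)^{-(d+1)/2}e^{-c|y-x|^2/(t-s)}|f(t,y)|\,dy\,dt=0$. -/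
open MeasureTheory Set Filter

open Real

section Aux

lemma integrable_gauss (d : ℕ) {b : ℝ} (hb : 0 < b) :
    Integrable (fun v : EuclideanSpace ℝ (Fin d) => Real.exp (-b * ‖v‖^2)) := by
  have h := (GaussianFourier.integrable_cexp_neg_mul_sq_norm_add
    (V := EuclideanSpace ℝ (Fin d))
    (show 0 < (b:ℂ).re by simpa using hb) 0 0).norm
  refine h.congr (Filter.Eventually.of_forall fun v => ?_)
  simp [Complex.norm_exp]
  norm_cast
  exact Or.inl rfl

lemma gauss_lint (d : ℕ) {b : ℝ} (hb : 0 < b) (x : EuclideanSpace ℝ (Fin d)) :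
    ∫⁻ y : EuclideanSpace ℝ (Fin d), ENNReal.ofReal (Real.exp (-b * ‖y - x‖^2)) =
      ENNReal.ofReal ((π / b) ^ ((d:ℝ)/2)) := by
  have htr : ∫⁻ y : EuclideanSpace ℝ (Fin d), ENNReal.ofReal (Real.exp (-b * ‖y - x‖^2)) =
      ∫⁻ y : EuclideanSpace ℝ (Fin d), ENNReal.ofReal (Real.exp (-b * ‖y‖^2)) := by
    simp_rw [sub_eq_add_neg]
    exact lintegral_add_right_eq_self (fun y => ENNReal.ofReal (Real.exp (-b * ‖y‖^2))) (-x)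
  rw [htr, ← ofReal_integral_eq_lintegral_ofReal (integrable_gauss d hb)
    (Filter.Eventually.of_forall fun v => (Real.exp_pos _).le)]
  rw [GaussianFourier.integral_rexp_neg_mul_sq_norm hb]
  simp

lemma real_int_left {a b : ℝ} (hab : a ≤ b) :
    ∫ t in a..b, (t - a) ^ (-(1:ℝ)/2) = 2 * Real.sqrt (b - a) := by
  rw [intervalIntegral.integral_comp_sub_right (fun t => t ^ (-(1:ℝ)/2)) a]
  rw [integral_rpow (Or.inl (by norm_num))]
  rw [Real.sqrt_eq_rpow]
  norm_num
  ring

lemma sqrt_int_left {a b : ℝ} (hab : a ≤ b) :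
    ∫⁻ t in Set.Ioc a b, ENNReal.ofReal ((t - a) ^ (-(1:ℝ)/2)) =
      ENNReal.ofReal (2 * Real.sqrt (b - a)) := by
  have hii : IntervalIntegrable (fun t : ℝ => (t - a) ^ (-(1:ℝ)/2)) volume a b := by
    have := (intervalIntegral.intervalIntegrable_rpow' (a := 0) (b := b - a)
      (r := -(1:ℝ)/2) (by norm_num)).comp_sub_right a
    simpa using this
  have hint : IntegrableOn (fun t : ℝ => (t - a) ^ (-(1:ℝ)/2)) (Set.Ioc a b) := by
    rw [← intervalIntegrable_iff_integrableOn_Ioc_of_le hab]; exact hii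
  rw [← ofReal_integral_eq_lintegral_ofReal hint ?_]
  · rw [← intervalIntegral.integral_of_le hab, real_int_left hab]
  · refine (ae_restrict_iff' measurableSet_Ioc).2 (Filter.Eventually.of_forall fun t ht => ?_)
    exact Real.rpow_nonneg (by linarith [ht.1]) _

lemma real_int_right {a b : ℝ} (hab : a ≤ b) :
    ∫ t in a..b, (b - t) ^ (-(1:ℝ)/2) = 2 * Real.sqrt (b - a) := by
  rw [intervalIntegral.integral_comp_sub_left (fun t => t ^ (-(1:ℝ)/2)) b]
  simp only [sub_self]
  rw [integral_rpow (Or.inl (by norm_num))]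
  rw [Real.sqrt_eq_rpow]
  norm_num
  ring

lemma sqrt_int_right {a b : ℝ} (hab : a ≤ b) :
    ∫⁻ t in Set.Ico a b, ENNReal.ofReal ((b - t) ^ (-(1:ℝ)/2)) =
      ENNReal.ofReal (2 * Real.sqrt (b - a)) := by
  have hii : IntervalIntegrable (fun t : ℝ => (b - t) ^ (-(1:ℝ)/2)) volume a b := by
    have := (intervalIntegral.intervalIntegrable_rpow' (a := b - b) (b := b - a)
      (r := -(1:ℝ)/2) (by norm_num)).comp_sub_left b
    simpa using this.symm
  have hint : IntegrableOn (fun t : ℝ => (b - t) ^ (-(1:ℝ)/2)) (Set.Ioc a b) := by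
    rw [← intervalIntegrable_iff_integrableOn_Ioc_of_le hab]; exact hii
  rw [show (volume.restrict (Set.Ico a b)) = volume.restrict (Set.Ioc a b) from
    Measure.restrict_congr_set Ico_ae_eq_Ioc]
  rw [← ofReal_integral_eq_lintegral_ofReal hint ?_]
  · rw [← intervalIntegral.integral_of_le hab, real_int_right hab]
  · refine (ae_restrict_iff' measurableSet_Ioc).2 (Filter.Eventually.of_forall fun t ht => ?_)
    exact Real.rpow_nonneg (by linarith [ht.2]) _

lemma near_one {s : ℝ} (hs : s < 1) :
    ∫⁻ t in Set.Ioo s 1, ENNReal.ofReal ((t - s) ^ (-(1:ℝ)/2) * (1 - t) ^ (-(1:ℝ)/2)) ≤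
      ENNReal.ofReal 4 := by
  set m : ℝ := (s + 1) / 2 with hm
  set δ : ℝ := (1 - s) / 2 with hδ
  have hδ0 : 0 < δ := by rw [hδ]; linarith
  have hsm : s ≤ m := by rw [hm]; linarith
  have hm1 : m ≤ 1 := by rw [hm]; linarith
  have hsub : Set.Ioo s 1 ⊆ Set.Ioc s m ∪ Set.Ico m 1 := by
    intro t ht
    rcases le_or_gt t m with h | h
    · exact Or.inl ⟨ht.1, h⟩
    · exact Or.inr ⟨h.le, ht.2⟩
  calc ∫⁻ t in Set.Ioo s 1, ENNReal.ofReal ((t - s) ^ (-(1:ℝ)/2) * (1 - t) ^ (-(1:ℝ)/2))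
      ≤ ∫⁻ t in Set.Ioc s m ∪ Set.Ico m 1,
          ENNReal.ofReal ((t - s) ^ (-(1:ℝ)/2) * (1 - t) ^ (-(1:ℝ)/2)) :=
        lintegral_mono_set hsub
    _ ≤ (∫⁻ t in Set.Ioc s m, ENNReal.ofReal ((t - s) ^ (-(1:ℝ)/2) * (1 - t) ^ (-(1:ℝ)/2))) +
        ∫⁻ t in Set.Ico m 1, ENNReal.ofReal ((t - s) ^ (-(1:ℝ)/2) * (1 - t) ^ (-(1:ℝ)/2)) :=
        lintegral_union_le _ _ _
    _ ≤ ENNReal.ofReal 2 + ENNReal.ofReal 2 := by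
        gcongr
        · calc ∫⁻ t in Set.Ioc s m, ENNReal.ofReal ((t - s) ^ (-(1:ℝ)/2) * (1 - t) ^ (-(1:ℝ)/2))
              ≤ ∫⁻ t in Set.Ioc s m,
                  ENNReal.ofReal (δ ^ (-(1:ℝ)/2)) * ENNReal.ofReal ((t - s) ^ (-(1:ℝ)/2)) := by
                refine setLIntegral_mono' measurableSet_Ioc fun t ht => ?_
                rw [← ENNReal.ofReal_mul (Real.rpow_nonneg hδ0.le _), mul_comm ((t-s) ^ _)]
                refine ENNReal.ofReal_le_ofReal (mul_le_mul_of_nonneg_right ?_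
                  (Real.rpow_nonneg (by linarith [ht.1]) _))
                refine Real.rpow_le_rpow_of_nonpos hδ0 ?_ (by norm_num)
                rw [hδ, hm] at *; linarith [ht.2]
            _ = ENNReal.ofReal (δ ^ (-(1:ℝ)/2)) * ENNReal.ofReal (2 * Real.sqrt (m - s)) := by
                rw [lintegral_const_mul' _ _ ENNReal.ofReal_ne_top, sqrt_int_left hsm]
            _ = ENNReal.ofReal 2 := by
                rw [← ENNReal.ofReal_mul (Real.rpow_nonneg hδ0.le _)]
                congr 1
                have hms : m - s = δ := by rw [hm, hδ]; ring
                rw [hms, Real.sqrt_eq_rpow, mul_comm 2, ← mul_assoc, ← Real.rpow_add hδ0]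
                norm_num
        · calc ∫⁻ t in Set.Ico m 1, ENNReal.ofReal ((t - s) ^ (-(1:ℝ)/2) * (1 - t) ^ (-(1:ℝ)/2))
              ≤ ∫⁻ t in Set.Ico m 1,
                  ENNReal.ofReal (δ ^ (-(1:ℝ)/2)) * ENNReal.ofReal ((1 - t) ^ (-(1:ℝ)/2)) := by
                refine setLIntegral_mono' measurableSet_Ico fun t ht => ?_
                rw [← ENNReal.ofReal_mul (Real.rpow_nonneg hδ0.le _)]
                refine ENNReal.ofReal_le_ofReal (mul_le_mul_of_nonneg_right ?_
                  (Real.rpow_nonneg (by linarith [ht.2]) _))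
                refine Real.rpow_le_rpow_of_nonpos hδ0 ?_ (by norm_num)
                rw [hδ, hm] at *; linarith [ht.1]
            _ = ENNReal.ofReal (δ ^ (-(1:ℝ)/2)) * ENNReal.ofReal (2 * Real.sqrt (1 - m)) := by
                rw [lintegral_const_mul' _ _ ENNReal.ofReal_ne_top, sqrt_int_right hm1]
            _ = ENNReal.ofReal 2 := by
                rw [← ENNReal.ofReal_mul (Real.rpow_nonneg hδ0.le _)]
                congr 1
                have hms : 1 - m = δ := by rw [hm, hδ]; ring
                rw [hms, Real.sqrt_eq_rpow, mul_comm 2, ← mul_assoc, ← Real.rpow_add hδ0]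
                norm_num
    _ = ENNReal.ofReal 4 := by rw [← ENNReal.ofReal_add] <;> norm_num

noncomputable def gfun (t : ℝ) : ℝ := (Real.sqrt (1 - t) * (-Real.log (1 - t)))⁻¹
noncomputable def Gfun (t : ℝ) : ℝ := Set.indicator (Set.Ico (1/2 : ℝ) 1) gfun t

lemma gfun_nonneg {t : ℝ} (ht : t ∈ Set.Ico (1/2 : ℝ) 1) : 0 ≤ gfun t := by
  unfold gfun
  have h1 : 0 < (1:ℝ) - t := by linarith [ht.2]
  exact inv_nonneg.2 (mul_nonneg (Real.sqrt_nonneg _)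
    (by simpa using Real.log_nonpos h1.le (by linarith [ht.1])))

lemma Gfun_nonneg (t : ℝ) : 0 ≤ Gfun t :=
  Set.indicator_nonneg (fun x hx => gfun_nonneg hx) t

lemma Gfun_eq_zero {t : ℝ} (ht : t ∉ Set.Ico (1/2 : ℝ) 1) : Gfun t = 0 :=
  Set.indicator_of_notMem ht _

lemma gfun_le {t β lg : ℝ} (ht : t ∈ Set.Ico (1/2:ℝ) 1) (hβ : 0 < β) (hβt : β ≤ 1 - t)
    (hlg : 0 < lg) (hlog : lg ≤ -Real.log (1 - t)) :
    gfun t ≤ β ^ (-(1:ℝ)/2) * lg⁻¹ := by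
  unfold gfun
  have h1t : 0 < 1 - t := lt_of_lt_of_le hβ hβt
  rw [mul_inv]
  have h1 : (Real.sqrt (1 - t))⁻¹ ≤ β ^ (-(1:ℝ)/2) := by
    have hb : β ^ (-(1:ℝ)/2) = (Real.sqrt β)⁻¹ := by
      rw [Real.sqrt_eq_rpow, ← Real.rpow_neg hβ.le]
      norm_num
    rw [hb]
    exact inv_anti₀ (Real.sqrt_pos.2 hβ) (Real.sqrt_le_sqrt hβt)
  have h2 : (-Real.log (1 - t))⁻¹ ≤ lg⁻¹ := inv_anti₀ hlg hlog
  exact mul_le_mul h1 h2 (inv_nonneg.2 (by linarith)) (Real.rpow_nonneg hβ.le _)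

lemma abs_f_le {d : ℕ} (f : ℝ → EuclideanSpace ℝ (Fin d) → ℝ)
    (hf : ∀ t y, f t y =
      if 1 / 2 ≤ t ∧ t < 1 ∧ ‖y‖ ≤ 3 * d * Real.sqrt (1 - t) then
        -(Real.sqrt (1 - t) * Real.log (1 - t))⁻¹ else 0)
    (t : ℝ) (y : EuclideanSpace ℝ (Fin d)) : |f t y| ≤ Gfun t := by
  rw [hf]
  split_ifs with h
  · obtain ⟨h1, h2, -⟩ := h
    have hG : Gfun t = gfun t := Set.indicator_of_mem (Set.mem_Ico.2 ⟨h1, h2⟩) _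
    rw [hG]
    unfold gfun
    rw [abs_neg, abs_inv, abs_mul, abs_of_nonneg (Real.sqrt_nonneg _),
      abs_of_nonpos (Real.log_nonpos (by linarith) (by linarith))]
  · simpa using Gfun_nonneg t

lemma inner_bound (d : ℕ) {c s t : ℝ} (hc : 0 < c) (hst : s < t)
    (x : EuclideanSpace ℝ (Fin d)) (f : ℝ → EuclideanSpace ℝ (Fin d) → ℝ)
    (hf : ∀ t y, f t y =
      if 1 / 2 ≤ t ∧ t < 1 ∧ ‖y‖ ≤ 3 * d * Real.sqrt (1 - t) then
        -(Real.sqrt (1 - t) * Real.log (1 - t))⁻¹ else 0) :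
    ∫⁻ y, ENNReal.ofReal (gker d c s x t y * |f t y|) ≤
      ENNReal.ofReal ((π / c) ^ ((d:ℝ)/2) * (t - s) ^ (-(1:ℝ)/2) * Gfun t) := by
  have hτ : 0 < t - s := by linarith
  have hb : 0 < c / (t - s) := div_pos hc hτ
  have hX : (0:ℝ) ≤ (t - s) ^ (-(((d:ℝ) + 1) / 2)) := Real.rpow_nonneg hτ.le _
  have step1 : ∀ y : EuclideanSpace ℝ (Fin d),
      ENNReal.ofReal (gker d c s x t y * |f t y|) ≤
      ENNReal.ofReal ((t - s) ^ (-(((d:ℝ) + 1) / 2)) * Gfun t) *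
        ENNReal.ofReal (Real.exp (-(c / (t - s)) * ‖y - x‖ ^ 2)) := by
    intro y
    rw [← ENNReal.ofReal_mul (mul_nonneg hX (Gfun_nonneg t))]
    refine ENNReal.ofReal_le_ofReal ?_
    have harg : -c * ‖y - x‖ ^ 2 / (t - s) = -(c / (t - s)) * ‖y - x‖ ^ 2 := by ring
    unfold gker
    rw [show Real.rpow (t - s) (-(((d:ℝ) + 1) / 2)) = (t - s) ^ (-(((d:ℝ) + 1) / 2)) from rfl,
      harg]
    refine le_trans (mul_le_mul_of_nonneg_left (abs_f_le f hf t y)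
      (mul_nonneg hX (Real.exp_nonneg _))) (le_of_eq (by ring))
  have h2 : (t - s) ^ (-(((d:ℝ) + 1) / 2)) * (t - s) ^ ((d:ℝ)/2) = (t - s) ^ (-(1:ℝ)/2) := by
    rw [← Real.rpow_add hτ]; congr 1; ring
  calc ∫⁻ y, ENNReal.ofReal (gker d c s x t y * |f t y|)
      ≤ ∫⁻ y, ENNReal.ofReal ((t - s) ^ (-(((d:ℝ) + 1) / 2)) * Gfun t) *
          ENNReal.ofReal (Real.exp (-(c / (t - s)) * ‖y - x‖ ^ 2)) := lintegral_mono step1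
    _ = ENNReal.ofReal ((t - s) ^ (-(((d:ℝ) + 1) / 2)) * Gfun t) *
          ENNReal.ofReal ((π / (c / (t - s))) ^ ((d:ℝ)/2)) := by
        rw [lintegral_const_mul' _ _ ENNReal.ofReal_ne_top, gauss_lint d hb x]
    _ = ENNReal.ofReal ((π / c) ^ ((d:ℝ)/2) * (t - s) ^ (-(1:ℝ)/2) * Gfun t) := by
        rw [← ENNReal.ofReal_mul (mul_nonneg hX (Gfun_nonneg t))]
        congr 1
        have h1 : π / (c / (t - s)) = (π / c) * (t - s) := by field_simp
        rw [h1, Real.mul_rpow (by positivity) hτ.le]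
        calc (t - s) ^ (-(((d:ℝ) + 1) / 2)) * Gfun t *
              ((π/c) ^ ((d:ℝ)/2) * (t - s) ^ ((d:ℝ)/2))
            = ((t - s) ^ (-(((d:ℝ) + 1) / 2)) * (t - s) ^ ((d:ℝ)/2)) *
              (π/c) ^ ((d:ℝ)/2) * Gfun t := by ring
          _ = (π / c) ^ ((d:ℝ)/2) * (t - s) ^ (-(1:ℝ)/2) * Gfun t := by rw [h2]; ring

end Aux

theorem stmt9 (d : ℕ) (hd : 1 ≤ d) (c : ℝ) (hc : 0 < c)
    (f : ℝ → EuclideanSpace ℝ (Fin d) → ℝ)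
    (hf : ∀ t y, f t y =
      if 1 / 2 ≤ t ∧ t < 1 ∧ ‖y‖ ≤ 3 * d * Real.sqrt (1 - t) then
        -(Real.sqrt (1 - t) * Real.log (1 - t))⁻¹ else 0) :
    memFK d c f := by
  rw [memFK, ENNReal.tendsto_nhds_zero]
  intro ε hε
  set K : ℝ := (π / c) ^ ((d:ℝ)/2) with hKdef
  have hK : 0 < K := Real.rpow_pos_of_pos (div_pos Real.pi_pos hc) _
  obtain ⟨e, he, hee⟩ : ∃ e : ℝ, 0 < e ∧ ENNReal.ofReal e ≤ ε := by
    rcases eq_or_ne ε ⊤ with rfl | hne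
    · exact ⟨1, one_pos, le_top⟩
    · exact ⟨ε.toReal, ENNReal.toReal_pos hε.ne' hne, by rw [ENNReal.ofReal_toReal hne]⟩
  set L : ℝ := max 1 (8 * K / e) with hLdef
  have hL1 : (1:ℝ) ≤ L := le_max_left _ _
  have hL0 : 0 < L := lt_of_lt_of_le one_pos hL1
  have hL8 : 8 * K / e ≤ L := le_max_right _ _
  set a : ℝ := 1 - Real.exp (-L) with hadef
  have h1a : 1 - a = Real.exp (-L) := by rw [hadef]; ring
  have h1a0 : 0 < 1 - a := by rw [h1a]; exact Real.exp_pos _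
  have ha1 : a < 1 := by linarith
  have hhalf : 1 - a ≤ 1/2 := by
    rw [h1a]
    calc Real.exp (-L) ≤ Real.exp (-1) := Real.exp_le_exp.2 (by linarith)
      _ ≤ 1/2 := by
          rw [Real.exp_neg, show (1:ℝ)/2 = 2⁻¹ by norm_num]
          exact inv_anti₀ (by norm_num) (by nlinarith [Real.exp_one_gt_d9])
  have ha2 : 1/2 ≤ a := by linarith
  set M : ℝ := ((1 - a)/2) ^ (-(1:ℝ)/2) * (Real.log 2)⁻¹ with hMdef
  have hM : 0 < M := mul_pos (Real.rpow_pos_of_pos (by linarith) _)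
    (inv_pos.2 (Real.log_pos (by norm_num)))
  set h₀ : ℝ := min ((1 - a)/2) ((e / (4*K*M + 1))^2) with hh₀def
  have hh₀ : 0 < h₀ := lt_min (by linarith) (by positivity)
  filter_upwards [Ioo_mem_nhdsGT_of_mem (Set.mem_Ico.2 ⟨le_refl (0:ℝ), hh₀⟩)] with h hh
  obtain ⟨hh0, hhh₀⟩ := hh
  refine le_trans ?_ hee
  rw [FKnorm]
  refine iSup_le fun s => iSup_le fun _ => iSup_le fun x => ?_
  have stepA : ∫⁻ t in Set.Ioo s (s + h), ∫⁻ y, ENNReal.ofReal (gker d c s x t y * |f t y|) ≤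
      ∫⁻ t in Set.Ioo s (s + h), ENNReal.ofReal (K * (t - s) ^ (-(1:ℝ)/2) * Gfun t) :=
    setLIntegral_mono' measurableSet_Ioo fun t ht => inner_bound d hc ht.1 x f hf
  refine le_trans stepA ?_
  rcases le_or_gt 1 s with hs1 | hs1
  · -- s ≥ 1 : everything vanishes
    have : ∫⁻ t in Set.Ioo s (s + h), ENNReal.ofReal (K * (t - s) ^ (-(1:ℝ)/2) * Gfun t) = 0 := by
      rw [← lintegral_zero (μ := volume.restrict (Set.Ioo s (s+h)))]
      refine setLIntegral_congr_fun measurableSet_Ioo (fun t ht => ?_)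
      have : Gfun t = 0 := Gfun_eq_zero (fun hmem => absurd hmem.2 (by push_neg; linarith [ht.1]))
      simp [this]
    rw [this]; exact zero_le
  rcases le_or_gt a s with hsa | hsa
  · -- a ≤ s < 1 : near-one case
    have hpt : ∀ t ∈ Set.Ioo s (s + h), ENNReal.ofReal (K * (t - s) ^ (-(1:ℝ)/2) * Gfun t) ≤
        Set.indicator (Set.Ioo s 1)
          (fun t => ENNReal.ofReal ((K / L) *
            ((t - s) ^ (-(1:ℝ)/2) * (1 - t) ^ (-(1:ℝ)/2)))) t := by
      intro t ht
      by_cases hmem : t ∈ Set.Ico (1/2 : ℝ) 1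
      · have ht1 : t ∈ Set.Ioo s 1 := ⟨ht.1, hmem.2⟩
        rw [Set.indicator_of_mem ht1]
        refine ENNReal.ofReal_le_ofReal ?_
        have hGt : Gfun t = gfun t := Set.indicator_of_mem hmem _
        have h1t : 0 < 1 - t := by linarith [hmem.2]
        have hlog : L ≤ -Real.log (1 - t) := by
          have : 1 - t ≤ Real.exp (-L) := by rw [← h1a]; linarith [ht.1]
          have := Real.log_le_log h1t this
          rw [Real.log_exp] at this
          linarith
        have hg : gfun t ≤ (1 - t) ^ (-(1:ℝ)/2) * L⁻¹ :=
          gfun_le hmem h1t le_rfl hL0 hlog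
        rw [hGt]
        calc K * (t - s) ^ (-(1:ℝ)/2) * gfun t
            ≤ K * (t - s) ^ (-(1:ℝ)/2) * ((1 - t) ^ (-(1:ℝ)/2) * L⁻¹) := by
              refine mul_le_mul_of_nonneg_left hg
                (mul_nonneg hK.le (Real.rpow_nonneg (by linarith [ht.1]) _))
          _ = (K / L) * ((t - s) ^ (-(1:ℝ)/2) * (1 - t) ^ (-(1:ℝ)/2)) := by
              field_simp
      · have : Gfun t = 0 := Gfun_eq_zero hmem
        simp only [this, mul_zero, ENNReal.ofReal_zero]
        exact zero_le
    calc ∫⁻ t in Set.Ioo s (s + h), ENNReal.ofReal (K * (t - s) ^ (-(1:ℝ)/2) * Gfun t)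
        ≤ ∫⁻ t in Set.Ioo s (s + h), Set.indicator (Set.Ioo s 1)
            (fun t => ENNReal.ofReal ((K / L) *
              ((t - s) ^ (-(1:ℝ)/2) * (1 - t) ^ (-(1:ℝ)/2)))) t :=
          setLIntegral_mono' measurableSet_Ioo hpt
      _ ≤ ∫⁻ t, Set.indicator (Set.Ioo s 1)
            (fun t => ENNReal.ofReal ((K / L) *
              ((t - s) ^ (-(1:ℝ)/2) * (1 - t) ^ (-(1:ℝ)/2)))) t :=
          setLIntegral_le_lintegral _ _
      _ = ∫⁻ t in Set.Ioo s 1, ENNReal.ofReal ((K / L) *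
            ((t - s) ^ (-(1:ℝ)/2) * (1 - t) ^ (-(1:ℝ)/2))) := by
          rw [lintegral_indicator measurableSet_Ioo]
      _ = ENNReal.ofReal (K / L) *
            ∫⁻ t in Set.Ioo s 1, ENNReal.ofReal ((t - s) ^ (-(1:ℝ)/2) * (1 - t) ^ (-(1:ℝ)/2)) := by
          rw [← lintegral_const_mul' _ _ ENNReal.ofReal_ne_top]
          refine lintegral_congr fun t => ?_
          rw [← ENNReal.ofReal_mul (by positivity)]
      _ ≤ ENNReal.ofReal (K / L) * ENNReal.ofReal 4 := by
          gcongr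
          exact near_one hs1
      _ ≤ ENNReal.ofReal e := by
          rw [← ENNReal.ofReal_mul (by positivity)]
          refine ENNReal.ofReal_le_ofReal ?_
          rw [div_mul_eq_mul_div, div_le_iff₀ hL0]
          have : e * (8 * K / e) ≤ e * L := by
            refine mul_le_mul_of_nonneg_left hL8 he.le
          rw [mul_div_assoc] at this
          have h8 : e * (8 * K / e) = 8 * K := by field_simp
          nlinarith
  · -- s < a : bounded case
    have hpt : ∀ t ∈ Set.Ioo s (s + h), ENNReal.ofReal (K * (t - s) ^ (-(1:ℝ)/2) * Gfun t) ≤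
        ENNReal.ofReal ((K * M) * (t - s) ^ (-(1:ℝ)/2)) := by
      intro t ht
      by_cases hmem : t ∈ Set.Ico (1/2 : ℝ) 1
      · have hGt : Gfun t = gfun t := Set.indicator_of_mem hmem _
        have hth : t < s + h := ht.2
        have hta : t < a + (1 - a)/2 := by
          have : h ≤ (1 - a)/2 := le_trans hhh₀.le (min_le_left _ _)
          linarith
        have hβt : (1 - a)/2 ≤ 1 - t := by linarith
        have hlog2 : Real.log 2 ≤ -Real.log (1 - t) := by
          have h1t : 0 < 1 - t := by linarith [hmem.2]
          have h12 : 1 - t ≤ 1/2 := by linarith [hmem.1]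
          have := Real.log_le_log h1t h12
          rw [show (1:ℝ)/2 = 2⁻¹ by norm_num, Real.log_inv] at this
          linarith
        have hg : gfun t ≤ M := by
          rw [hMdef]
          exact gfun_le hmem (by linarith) hβt (Real.log_pos (by norm_num)) hlog2
        rw [hGt]
        refine ENNReal.ofReal_le_ofReal ?_
        calc K * (t - s) ^ (-(1:ℝ)/2) * gfun t
            ≤ K * (t - s) ^ (-(1:ℝ)/2) * M := by
              refine mul_le_mul_of_nonneg_left hg
                (mul_nonneg hK.le (Real.rpow_nonneg (by linarith [ht.1]) _))
          _ = (K * M) * (t - s) ^ (-(1:ℝ)/2) := by ring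
      · have : Gfun t = 0 := Gfun_eq_zero hmem
        simp only [this, mul_zero, ENNReal.ofReal_zero]
        exact zero_le
    calc ∫⁻ t in Set.Ioo s (s + h), ENNReal.ofReal (K * (t - s) ^ (-(1:ℝ)/2) * Gfun t)
        ≤ ∫⁻ t in Set.Ioo s (s + h), ENNReal.ofReal ((K * M) * (t - s) ^ (-(1:ℝ)/2)) :=
          setLIntegral_mono' measurableSet_Ioo hpt
      _ ≤ ∫⁻ t in Set.Ioc s (s + h), ENNReal.ofReal ((K * M) * (t - s) ^ (-(1:ℝ)/2)) :=
          lintegral_mono_set Set.Ioo_subset_Ioc_self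
      _ = ENNReal.ofReal (K * M) * ∫⁻ t in Set.Ioc s (s + h),
            ENNReal.ofReal ((t - s) ^ (-(1:ℝ)/2)) := by
          rw [← lintegral_const_mul' _ _ ENNReal.ofReal_ne_top]
          refine lintegral_congr fun t => ?_
          rw [← ENNReal.ofReal_mul (by positivity)]
      _ = ENNReal.ofReal (K * M) * ENNReal.ofReal (2 * Real.sqrt (s + h - s)) := by
          rw [sqrt_int_left (by linarith)]
      _ ≤ ENNReal.ofReal e := by
          rw [← ENNReal.ofReal_mul (by positivity)]
          refine ENNReal.ofReal_le_ofReal ?_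
          have hsq : Real.sqrt (s + h - s) ≤ e / (4*K*M + 1) := by
            rw [show s + h - s = h by ring]
            have : h ≤ (e / (4*K*M + 1))^2 := le_trans hhh₀.le (min_le_right _ _)
            calc Real.sqrt h ≤ Real.sqrt ((e / (4*K*M + 1))^2) := Real.sqrt_le_sqrt this
              _ = e / (4*K*M + 1) := Real.sqrt_sq (by positivity)
          have hKM : 0 < 4*K*M + 1 := by positivity
          set q : ℝ := e / (4*K*M + 1) with hqdef
          have hq : 0 < q := by positivity
          have hqe : q * (4*K*M + 1) = e := div_mul_cancel₀ e hKM.ne'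
          nlinarith [hsq, Real.sqrt_nonneg (s + h - s), hK, hM, hq]
end

section
/- Let $c>0$, $d\ge1$ and let $\tilde f(t,y)=f(1-t,y)$ for $0\le t\le1$ and $0$ otherwise, where $f(s,y)=-\big((1-s)^{1/2}\ln(1-s)\big)^{-1}$ for $1/2\le s<1$, $|y|\le 3d(1-s)^{1/2}$, and $0$ otherwise. Then for every $h\in(0,1)$, $N^{c,+}_h(\tilde f)=\infty$; in particular $\tilde f\notin\mathcal{FK}^c_{d-1}$. -/
open MeasureTheory Set Filter

lemma div_lemma' (a : ℝ) (h0 : 0 < a) (h1 : a < 1) :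
    ∫⁻ t in Ioo (0:ℝ) a, ENNReal.ofReal ((t * (-Real.log t))⁻¹) = ⊤ := by
  apply ENNReal.eq_top_of_forall_nnreal_le
  intro r
  have hLa : 0 < -Real.log a := neg_pos.2 (Real.log_neg h0 h1)
  set E : ℝ := Real.exp ((r:ℝ) + Real.log (-Real.log a)) with hE
  have hEpos : 0 < E := Real.exp_pos _
  set ε : ℝ := min (a/2) (Real.exp (-E)) with hεdef
  have hε0 : 0 < ε := lt_min (by linarith) (Real.exp_pos _)
  have hεa : ε < a := lt_of_le_of_lt (min_le_left _ _) (by linarith)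
  have hε1 : ε < 1 := hεa.trans h1
  have hlogε : 0 < -Real.log ε := neg_pos.2 (Real.log_neg hε0 hε1)
  -- derivative fact
  have hderiv : ∀ t ∈ Icc ε a, HasDerivAt (fun t => -Real.log (-Real.log t))
      ((t * (-Real.log t))⁻¹) t := by
    intro t ht
    have ht0 : 0 < t := hε0.trans_le ht.1
    have ht1 : t < 1 := lt_of_le_of_lt ht.2 h1
    have hlt : 0 < -Real.log t := neg_pos.2 (Real.log_neg ht0 ht1)
    have h1' : HasDerivAt (fun t : ℝ => -Real.log t) (-(t⁻¹)) t :=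
      (Real.hasDerivAt_log ht0.ne').neg
    have h2' : HasDerivAt (fun t : ℝ => Real.log (-Real.log t))
        ((-Real.log t)⁻¹ * (-(t⁻¹))) t :=
      by have := (Real.hasDerivAt_log hlt.ne').comp t h1'; exact this
    have := h2'.neg
    exact this.congr_deriv (by rw [mul_inv]; ring)
  have hcont : ContinuousOn (fun t : ℝ => (t * (-Real.log t))⁻¹) (Icc ε a) := by
    apply ContinuousOn.inv₀
    · refine continuousOn_id.mul ((Real.continuousOn_log.mono ?_).neg)
      intro t ht
      exact (hε0.trans_le ht.1).ne'
    · intro t ht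
      have ht0 : 0 < t := hε0.trans_le ht.1
      have hlt : 0 < -Real.log t := neg_pos.2 (Real.log_neg ht0 (lt_of_le_of_lt ht.2 h1))
      positivity
  have hIcc : uIcc ε a = Icc ε a := uIcc_of_le hεa.le
  have hInt : IntervalIntegrable (fun t : ℝ => (t * (-Real.log t))⁻¹) volume ε a := by
    apply ContinuousOn.intervalIntegrable
    rwa [hIcc]
  have key : ∫ t in ε..a, (t * (-Real.log t))⁻¹ =
      (-Real.log (-Real.log a)) - (-Real.log (-Real.log ε)) := by
    apply intervalIntegral.integral_eq_sub_of_hasDerivAt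
    · intro t ht; rw [hIcc] at ht; exact hderiv t ht
    · exact hInt
  -- the integral is at least r
  have hlarge : (r : ℝ) ≤ ∫ t in ε..a, (t * (-Real.log t))⁻¹ := by
    rw [key]
    have hεle : ε ≤ Real.exp (-E) := min_le_right _ _
    have : -Real.log ε ≥ E := by
      have := Real.log_le_log hε0 hεle
      rw [Real.log_exp] at this; linarith
    have h5 : Real.log E ≤ Real.log (-Real.log ε) := Real.log_le_log hEpos this
    rw [hE, Real.log_exp] at h5
    linarith
  -- convert to lintegral
  have hnn : 0 ≤ᵐ[volume.restrict (Ioc ε a)] fun t : ℝ => (t * (-Real.log t))⁻¹ := by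
    filter_upwards [ae_restrict_mem measurableSet_Ioc] with t ht
    have ht0 : 0 < t := hε0.trans ht.1
    have hlt : 0 < -Real.log t := neg_pos.2 (Real.log_neg ht0 (lt_of_le_of_lt ht.2 h1))
    positivity
  have hIntOn : IntegrableOn (fun t : ℝ => (t * (-Real.log t))⁻¹) (Ioc ε a) volume :=
    (intervalIntegrable_iff_integrableOn_Ioc_of_le hεa.le).mp hInt
  calc (r : ENNReal) = ENNReal.ofReal (r : ℝ) := ENNReal.ofReal_coe_nnreal.symm
    _ ≤ ENNReal.ofReal (∫ t in ε..a, (t * (-Real.log t))⁻¹) := ENNReal.ofReal_le_ofReal hlarge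
    _ = ENNReal.ofReal (∫ t in Ioc ε a, (t * (-Real.log t))⁻¹) := by
        rw [intervalIntegral.integral_of_le hεa.le]
    _ ≤ ∫⁻ t in Ioc ε a, ENNReal.ofReal ((t * (-Real.log t))⁻¹) :=
        (MeasureTheory.ofReal_integral_eq_lintegral_ofReal hIntOn hnn).le
    _ = ∫⁻ t in Ioo ε a, ENNReal.ofReal ((t * (-Real.log t))⁻¹) :=
        (setLIntegral_congr Ioo_ae_eq_Ioc).symm
    _ ≤ ∫⁻ t in Ioo 0 a, ENNReal.ofReal ((t * (-Real.log t))⁻¹) :=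
        lintegral_mono_set (Ioo_subset_Ioo_left hε0.le)


lemma FKnorm_top (d : ℕ) (hd : 1 ≤ d) (c : ℝ) (hc : 0 < c)
    (f tf : ℝ → EuclideanSpace ℝ (Fin d) → ℝ)
    (hf : ∀ t y, f t y =
      if 1 / 2 ≤ t ∧ t < 1 ∧ ‖y‖ ≤ 3 * d * Real.sqrt (1 - t) then
        -(Real.sqrt (1 - t) * Real.log (1 - t))⁻¹ else 0)
    (htf : ∀ t y, tf t y = if 0 ≤ t ∧ t ≤ 1 then f (1 - t) y else 0)
    (h : ℝ) (hh0 : 0 < h) (hh1 : h < 1) : FKnorm d c h tf = ⊤ := by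
  have hdp : (0:ℝ) < (d:ℝ) := by exact_mod_cast hd
  set m : ℝ := min h (1/2) with hm
  have hm0 : 0 < m := lt_min hh0 (by norm_num)
  have hmh : m ≤ h := min_le_left _ _
  have hm2 : m ≤ 1/2 := min_le_right _ _
  have hm1 : m < 1 := lt_of_le_of_lt hm2 (by norm_num)
  set C : ℝ := Real.exp (-(9 * c * (d:ℝ)^2)) * (3 * (d:ℝ)) ^ (d:ℕ) with hC
  have hCpos : 0 < C := by positivity
  set K : ENNReal := ENNReal.ofReal C * volume (Metric.ball (0 : EuclideanSpace ℝ (Fin d)) 1)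
    with hK
  have hKne0 : K ≠ 0 := by
    rw [hK]
    exact mul_ne_zero (ENNReal.ofReal_pos.2 hCpos).ne'
      (Metric.measure_ball_pos volume _ one_pos).ne'
  have hKnetop : K ≠ ⊤ :=
    ENNReal.mul_ne_top ENNReal.ofReal_ne_top measure_ball_lt_top.ne
  -- inner bound
  have inner : ∀ t ∈ Ioo (0:ℝ) m,
      K * ENNReal.ofReal ((t * (-Real.log t))⁻¹) ≤
        ∫⁻ y, ENNReal.ofReal (gker d c 0 0 t y * |tf t y|) := by
    intro t ht
    obtain ⟨ht0, htm⟩ := ht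
    have ht1 : t < 1 := htm.trans hm1
    have ht2 : t ≤ 1/2 := htm.le.trans hm2
    have hlt : 0 < -Real.log t := neg_pos.2 (Real.log_neg ht0 ht1)
    have hst : 0 < Real.sqrt t := Real.sqrt_pos.2 ht0
    set r : ℝ := 3 * (d:ℝ) * Real.sqrt t with hr
    have hrpos : 0 < r := by positivity
    set A : ℝ := t ^ (-(((d:ℝ) + 1) / 2)) * Real.exp (-(9 * c * (d:ℝ)^2)) *
      (Real.sqrt t * (-Real.log t))⁻¹ with hA
    have hApos : 0 < A := by
      have : (0:ℝ) < t ^ (-(((d:ℝ) + 1) / 2)) := Real.rpow_pos_of_pos ht0 _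
      positivity
    -- value of tf on the ball
    have htfval : ∀ y : EuclideanSpace ℝ (Fin d), ‖y‖ ≤ r →
        |tf t y| = (Real.sqrt t * (-Real.log t))⁻¹ := by
      intro y hy
      rw [htf, if_pos ⟨ht0.le, ht1.le⟩, hf, sub_sub_cancel,
        if_pos ⟨by linarith, by linarith, hy⟩]
      rw [abs_neg, abs_inv,
        abs_of_neg (mul_neg_of_pos_of_neg hst (Real.log_neg ht0 ht1)), ← mul_neg]
    -- pointwise lower bound on the ball
    have hpt : ∀ y ∈ Metric.closedBall (0 : EuclideanSpace ℝ (Fin d)) r,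
        ENNReal.ofReal A ≤ ENNReal.ofReal (gker d c 0 0 t y * |tf t y|) := by
      intro y hy
      rw [Metric.mem_closedBall, dist_zero_right] at hy
      apply ENNReal.ofReal_le_ofReal
      rw [htfval y hy]
      have hg : gker d c 0 0 t y =
          t ^ (-(((d:ℝ) + 1) / 2)) * Real.exp (-c * ‖y‖ ^ 2 / t) := by
        simp [gker, Real.rpow_def_of_pos ht0, Real.rpow_natCast]
      rw [hg, hA]
      have hexp : Real.exp (-(9 * c * (d:ℝ)^2)) ≤ Real.exp (-c * ‖y‖ ^ 2 / t) := by
        apply Real.exp_le_exp.2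
        rw [neg_mul, neg_div, neg_le_neg_iff, div_le_iff₀ ht0]
        have h1 : ‖y‖ ^ 2 ≤ r ^ 2 := by nlinarith [norm_nonneg y]
        have h2 : r ^ 2 = 9 * (d:ℝ)^2 * t := by
          rw [hr]; rw [mul_pow, mul_pow, Real.sq_sqrt ht0.le]; ring
        nlinarith [Real.sq_sqrt ht0.le]
      have h3 : (0:ℝ) < t ^ (-(((d:ℝ) + 1) / 2)) := Real.rpow_pos_of_pos ht0 _
      have h4 : (0:ℝ) ≤ (Real.sqrt t * (-Real.log t))⁻¹ := by positivity
      nlinarith [mul_le_mul_of_nonneg_left hexp h3.le]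
    -- integrate
    calc K * ENNReal.ofReal ((t * (-Real.log t))⁻¹)
        = ENNReal.ofReal A * volume (Metric.closedBall (0 : EuclideanSpace ℝ (Fin d)) r) := by
          rw [Measure.addHaar_closedBall _ _ hrpos.le, finrank_euclideanSpace_fin, hK]
          have h2 : ENNReal.ofReal A * (ENNReal.ofReal (r ^ (d:ℕ)) *
              volume (Metric.ball (0 : EuclideanSpace ℝ (Fin d)) 1)) =
              ENNReal.ofReal (A * r ^ (d:ℕ)) *
                volume (Metric.ball (0 : EuclideanSpace ℝ (Fin d)) 1) := by
            rw [← mul_assoc, ← ENNReal.ofReal_mul hApos.le]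
          rw [h2, show A * r ^ (d:ℕ) = C * (t * (-Real.log t))⁻¹ from ?_]
          · rw [ENNReal.ofReal_mul hCpos.le]; ring
          · rw [hA, hr, hC]
            have hprod : t ^ (-(((d:ℝ) + 1) / 2)) * (Real.sqrt t)⁻¹ *
                (Real.sqrt t) ^ (d:ℕ) = t⁻¹ := by
              rw [Real.sqrt_eq_rpow, ← Real.rpow_neg ht0.le,
                ← Real.rpow_natCast (t ^ ((1:ℝ)/2)) d,
                ← Real.rpow_mul ht0.le, ← Real.rpow_add ht0, ← Real.rpow_add ht0,
                show (-(((d:ℝ) + 1) / 2) + -(1/2) + 1/2 * (d:ℝ)) = (-1 : ℝ) by ring,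
                Real.rpow_neg_one]
            calc t ^ (-(((d:ℝ) + 1) / 2)) * Real.exp (-(9 * c * (d:ℝ)^2)) *
                (Real.sqrt t * (-Real.log t))⁻¹ * (3 * (d:ℝ) * Real.sqrt t) ^ (d:ℕ)
                = (t ^ (-(((d:ℝ) + 1) / 2)) * (Real.sqrt t)⁻¹ * (Real.sqrt t) ^ (d:ℕ)) *
                  (Real.exp (-(9 * c * (d:ℝ)^2)) * (3 * (d:ℝ)) ^ (d:ℕ) *
                    (-Real.log t)⁻¹) := by rw [mul_inv, mul_pow]; ring
              _ = t⁻¹ * (Real.exp (-(9 * c * (d:ℝ)^2)) * (3 * (d:ℝ)) ^ (d:ℕ) *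
                    (-Real.log t)⁻¹) := by rw [hprod]
              _ = _ := by rw [mul_inv]; ring
      _ = ∫⁻ _ in Metric.closedBall (0 : EuclideanSpace ℝ (Fin d)) r, ENNReal.ofReal A := by
          rw [setLIntegral_const]
      _ ≤ ∫⁻ y in Metric.closedBall (0 : EuclideanSpace ℝ (Fin d)) r,
            ENNReal.ofReal (gker d c 0 0 t y * |tf t y|) :=
          setLIntegral_mono' measurableSet_closedBall hpt
      _ ≤ ∫⁻ y, ENNReal.ofReal (gker d c 0 0 t y * |tf t y|) :=
          setLIntegral_le_lintegral _ _
  -- the s = 0, x = 0 term is infinite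
  have hterm : (∫⁻ t in Ioo (0:ℝ) (0 + h),
      ∫⁻ y, ENNReal.ofReal (gker d c 0 0 t y * |tf t y|)) = ⊤ := by
    rw [zero_add]
    rw [eq_top_iff]
    calc (⊤ : ENNReal) = K * ⊤ := (ENNReal.mul_top hKne0).symm
      _ = K * ∫⁻ t in Ioo (0:ℝ) m, ENNReal.ofReal ((t * (-Real.log t))⁻¹) := by
          rw [div_lemma' m hm0 hm1]
      _ = ∫⁻ t in Ioo (0:ℝ) m, K * ENNReal.ofReal ((t * (-Real.log t))⁻¹) :=
          (lintegral_const_mul' _ _ hKnetop).symm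
      _ ≤ ∫⁻ t in Ioo (0:ℝ) m,
            ∫⁻ y, ENNReal.ofReal (gker d c 0 0 t y * |tf t y|) := by
          apply setLIntegral_mono' measurableSet_Ioo inner
      _ ≤ ∫⁻ t in Ioo (0:ℝ) h,
            ∫⁻ y, ENNReal.ofReal (gker d c 0 0 t y * |tf t y|) :=
          lintegral_mono_set (Ioo_subset_Ioo_right hmh)
  rw [eq_top_iff, FKnorm]
  rw [← hterm]
  exact le_iSup_of_le (0:ℝ) (le_iSup_of_le (le_refl (0:ℝ))
    (le_iSup_of_le (0 : EuclideanSpace ℝ (Fin d)) le_rfl))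

theorem stmt10 (d : ℕ) (hd : 1 ≤ d) (c : ℝ) (hc : 0 < c)
    (f tf : ℝ → EuclideanSpace ℝ (Fin d) → ℝ)
    (hf : ∀ t y, f t y =
      if 1 / 2 ≤ t ∧ t < 1 ∧ ‖y‖ ≤ 3 * d * Real.sqrt (1 - t) then
        -(Real.sqrt (1 - t) * Real.log (1 - t))⁻¹ else 0)
    (htf : ∀ t y, tf t y = if 0 ≤ t ∧ t ≤ 1 then f (1 - t) y else 0) :
    (∀ h : ℝ, 0 < h → h < 1 → FKnorm d c h tf = ⊤) ∧ ¬ memFK d c tf := by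
  have hmain : ∀ h : ℝ, 0 < h → h < 1 → FKnorm d c h tf = ⊤ :=
    fun h hh0 hh1 => FKnorm_top d hd c hc f tf hf htf h hh0 hh1
  refine ⟨hmain, fun hmem => ?_⟩
  have h2 : ∀ᶠ h in nhdsWithin (0:ℝ) (Set.Ioi 0), FKnorm d c h tf < 1 :=
    hmem.eventually_lt_const (by norm_num)
  have h3 : Ioo (0:ℝ) 1 ∈ nhdsWithin (0:ℝ) (Set.Ioi 0) :=
    Ioo_mem_nhdsGT_of_mem (left_mem_Ico.2 one_pos)
  obtain ⟨h, hlt, hIoo⟩ := (h2.and h3).exists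
  rw [hmain h hIoo.1 hIoo.2] at hlt
  simp at hlt
end
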